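/- arXiv:1712.07559 — 5 statements merged into one kernel-verified Lean document; each statement's English description precedes it below -/
import Mathlib

section
/- Let x and y be circular sectors in the plane with opening angles α(x), α(y) ≤ π/4, apexes p(x), p(y), and bisector directions u(x), u(y). If x and y form a mutual couple, i.e., p(x) ∈ y and p(y) ∈ x, then the counter-clockwise angle γ(u(x), u(y)) between their direction vectors satisfies |π − γ(u(x), u(y))| ≤ (α(x) + α(y))/2. -/
open Real Set

noncomputable section

abbrev E2 := EuclideanSpace ℝ (Fin 2)

/-- Euclidean inner product on the plane. -/
def iprod (x y : E2) : ℝ := inner ℝ x y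

structure Sector where
  p : E2
  u : E2
  r : ℝ
  α : ℝ
  hu : ‖u‖ = 1
  hr : 0 < r
  hα : 0 < α

def Sector.mem (c : Sector) (q : E2) : Prop :=
  dist q c.p ≤ c.r ∧ InnerProductGeometry.angle (q - c.p) c.u ≤ c.α / 2

instance : Fact (Module.finrank ℝ E2 = 2) := ⟨finrank_euclideanSpace_fin⟩

def stdOrient : Orientation ℝ E2 (Fin 2) :=
  (EuclideanSpace.basisFun (Fin 2) ℝ).toBasis.orientation

/-- Counter-clockwise angle from `u` to `v`, in `[0, 2π)`. -/
def ccw (u v : E2) : ℝ :=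
  if (stdOrient.oangle u v).toReal < 0 then (stdOrient.oangle u v).toReal + 2 * π
  else (stdOrient.oangle u v).toReal

def lineThrough (p d : E2) : Set E2 := {q | ∃ t : ℝ, q = p + t • d}

def segFrom (b d : E2) (r : ℝ) : Set E2 := {q | ∃ t : ℝ, 0 ≤ t ∧ t ≤ r ∧ q = b + t • d}

def lineSide (p d q : E2) : ℝ := (q 0 - p 0) * d 1 - (q 1 - p 1) * d 0

def acuteAngle (u v : E2) : ℝ :=
  min (InnerProductGeometry.angle u v) (π - InnerProductGeometry.angle u v)

/-! With `d = p(y) - p(x)`, the two memberships say `∠(d, u(x)) ≤ α(x)/2` and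
`∠(-d, u(y)) ≤ α(y)/2`. For oriented angles, `∡(u(x), u(y)) - π = ∡(u(x), d) + ∡(-d, u(y))`,
while `|π - γ|` is the norm of `∡(u(x), u(y)) - π` in `ℝ/2πℤ`. That norm is subadditive and
turns an oriented angle into the unoriented one. -/

open InnerProductGeometry

namespace Real.Angle

theorem norm_eq_abs_toReal (θ : Angle) : ‖θ‖ = |θ.toReal| := by
  conv_lhs => rw [← coe_toReal θ]
  refine (AddCircle.norm_coe_eq_abs_iff _ two_pi_pos.ne').2 ?_
  rw [abs_of_pos two_pi_pos, mul_div_cancel_left₀ _ two_ne_zero]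
  exact abs_toReal_le_pi θ

theorem norm_le_pi (θ : Angle) : ‖θ‖ ≤ π :=
  norm_eq_abs_toReal θ ▸ abs_toReal_le_pi θ

end Real.Angle

namespace Orientation

variable {V : Type*} [NormedAddCommGroup V] [InnerProductSpace ℝ V] [Fact (Module.finrank ℝ V = 2)]
  (o : Orientation ℝ V (Fin 2))

theorem norm_oangle_eq_angle {x y : V} (hx : x ≠ 0) (hy : y ≠ 0) :
    ‖o.oangle x y‖ = angle x y := by
  rw [Real.Angle.norm_eq_abs_toReal, o.angle_eq_abs_oangle_toReal hx hy]

theorem norm_oangle_sub_pi_le_angle_add_angle {x y : V} (hx : x ≠ 0) (hy : y ≠ 0) (d : V) :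
    ‖o.oangle x y - (π : Real.Angle)‖ ≤ angle d x + angle (-d) y := by
  rcases eq_or_ne d 0 with rfl | hd
  -- `angle 0 x = π / 2`, so the bound is `π`, which no angle exceeds
  · simpa only [neg_zero, angle_zero_left, add_halves] using Real.Angle.norm_le_pi _
  have hsplit : o.oangle x y - (π : Real.Angle) = o.oangle x d + o.oangle (-d) y := by
    rw [o.oangle_neg_left hd hy, ← add_assoc, o.oangle_add hx hd hy,
      Real.Angle.sub_coe_pi_eq_add_coe_pi]
  calc ‖o.oangle x y - (π : Real.Angle)‖ ≤ ‖o.oangle x d‖ + ‖o.oangle (-d) y‖ :=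
        hsplit ▸ norm_add_le _ _
    _ = angle d x + angle (-d) y := by
      rw [o.norm_oangle_eq_angle hx hd, o.norm_oangle_eq_angle (neg_ne_zero.2 hd) hy, angle_comm]

end Orientation

theorem coe_ccw (u v : E2) : (ccw u v : Real.Angle) = stdOrient.oangle u v := by
  unfold ccw
  split_ifs <;> simp [Real.Angle.coe_add, Real.Angle.coe_two_pi]

theorem ccw_mem_Ico (u v : E2) : ccw u v ∈ Ico 0 (2 * π) := by
  have h₁ := Real.Angle.neg_pi_lt_toReal (stdOrient.oangle u v)
  have h₂ := Real.Angle.toReal_le_pi (stdOrient.oangle u v)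
  unfold ccw
  split_ifs with h <;> constructor <;> linarith [pi_pos]

theorem abs_pi_sub_ccw (u v : E2) :
    |π - ccw u v| = ‖stdOrient.oangle u v - (π : Real.Angle)‖ := by
  obtain ⟨h₀, h₂π⟩ := ccw_mem_Ico u v
  rw [← coe_ccw, ← Real.Angle.coe_sub, ← norm_neg, ← Real.Angle.coe_neg, neg_sub]
  refine ((AddCircle.norm_coe_eq_abs_iff _ two_pi_pos.ne').2 ?_).symm
  rw [abs_of_pos two_pi_pos, abs_le]
  constructor <;> linarith

theorem Sector.u_ne_zero (c : Sector) : c.u ≠ 0 :=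
  norm_ne_zero_iff.1 (c.hu ▸ one_ne_zero)

theorem mutual_couple_angle_general (x y : Sector)
    (hxy : x.mem y.p) (hyx : y.mem x.p) :
    |π - ccw x.u y.u| ≤ (x.α + y.α) / 2 := by
  have hx : angle (y.p - x.p) x.u ≤ x.α / 2 := hxy.2
  have hy : angle (-(y.p - x.p)) y.u ≤ y.α / 2 := by simpa only [neg_sub] using hyx.2
  rw [abs_pi_sub_ccw]
  calc _ ≤ angle (y.p - x.p) x.u + angle (-(y.p - x.p)) y.u :=
        stdOrient.norm_oangle_sub_pi_le_angle_add_angle x.u_ne_zero y.u_ne_zero _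
    _ ≤ (x.α + y.α) / 2 := by linarith

/-- Observation 1: a mutual couple of circular sectors (each with opening angle at
most π/4) has nearly opposite directions: |π − γ(u(x), u(y))| ≤ (α(x) + α(y))/2. -/
theorem mutual_couple_angle (x y : Sector)
    (hx : x.α ≤ π / 4) (hy : y.α ≤ π / 4)
    (hxy : x.mem y.p) (hyx : y.mem x.p) :
    |π - ccw x.u y.u| ≤ (x.α + y.α) / 2 :=
  mutual_couple_angle_general x y hxy hyx
end
end

section
/- Let l be a circular sector with opening angle α(l) ≤ π/4 and let a₁, …, aₙ be circular sectors each with opening angle at most π/4 such that: p(aᵢ) ∈ l for all i; p(aᵢ) ∈ aⱼ for all 1 ≤ i < j ≤ n; and p(l) ∈ aⱼ for all j. Then the orthogonal projections of the apexes p(a₁), …, p(aₙ) onto the directed line through p(l) with direction u(l) occur in the order p(a₁), p(a₂), …, p(aₙ) (non-decreasing in the direction u(l)). -/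
/-!
Put `w = p(aᵢ) - p(aⱼ)` and `z = p(l) - p(aⱼ)`. Both make an angle at most `π/8` with `u(aⱼ)`,
and `-z = p(aⱼ) - p(l)` makes an angle at most `π/8` with `u(l)`. By the triangle inequality
for angles, `w` makes an angle at most `3π/8 < π/2` with `-u(l)`, hence `⟪w, u(l)⟫ ≤ 0`,
which is the claimed inequality between the projections of `p(aᵢ)` and `p(aⱼ)`.
-/

open Real Set

noncomputable section

namespace InnerProductGeometry

variable {V : Type*} [NormedAddCommGroup V] [InnerProductSpace ℝ V]

theorem inner_nonneg_of_angle_le_pi_div_two {x y : V} (h : angle x y ≤ π / 2) :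
    0 ≤ inner ℝ x y := by
  rw [← cos_angle_mul_norm_mul_norm]
  have := cos_nonneg_of_mem_Icc ⟨by linarith [angle_nonneg x y, pi_pos], h⟩
  positivity

theorem inner_nonpos_of_angle_add_angle_add_angle_le_pi_div_two {w z u v : V}
    (h : angle w v + angle z v + angle (-z) u ≤ π / 2) : inner ℝ w u ≤ 0 := by
  have hw : angle w (-u) ≤ π / 2 :=
    calc angle w (-u) ≤ angle w v + angle v (-u) := angle_le_angle_add_angle _ _ _
      _ ≤ angle w v + (angle v z + angle z (-u)) := by
        gcongr; exact angle_le_angle_add_angle _ _ _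
      _ = angle w v + angle z v + angle (-z) u := by
        rw [angle_comm v z, ← angle_neg_neg z (-u), neg_neg]; ring
      _ ≤ π / 2 := h
  simpa [inner_neg_right] using inner_nonneg_of_angle_le_pi_div_two hw

end InnerProductGeometry

open InnerProductGeometry

/-- Lemma 1 (ordering gadget): if each apex p(aᵢ) lies in `l`, each p(aᵢ) lies in `aⱼ`
for i < j, and p(l) lies in every `aⱼ`, then projections of the apexes onto the
directed line through p(l) with direction u(l) are in non-decreasing order. -/
theorem ordering_gadget (n : ℕ) (l : Sector) (a : Fin n → Sector)
    (hl : l.α ≤ π / 4) (ha : ∀ i, (a i).α ≤ π / 4)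
    (h1 : ∀ i, l.mem (a i).p)
    (h2 : ∀ i j : Fin n, i < j → (a j).mem (a i).p)
    (h3 : ∀ j, (a j).mem l.p) :
    ∀ i j : Fin n, i ≤ j →
      iprod ((a i).p - l.p) l.u ≤ iprod ((a j).p - l.p) l.u := by
  intro i j hij
  rcases hij.eq_or_lt with rfl | hlt
  · exact le_rfl
  have hi_ang : angle ((a i).p - (a j).p) (a j).u ≤ (a j).α / 2 := (h2 i j hlt).2
  have hl_ang : angle (l.p - (a j).p) (a j).u ≤ (a j).α / 2 := (h3 j).2
  have hj_ang : angle (-(l.p - (a j).p)) l.u ≤ l.α / 2 := by rw [neg_sub]; exact (h1 j).2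
  have hinner : inner ℝ ((a i).p - (a j).p) l.u ≤ 0 :=
    inner_nonpos_of_angle_add_angle_add_angle_le_pi_div_two (z := l.p - (a j).p) (v := (a j).u)
      (by linarith [ha j, pi_pos])
  have hproj : iprod ((a i).p - l.p) l.u - iprod ((a j).p - l.p) l.u
      = inner ℝ ((a i).p - (a j).p) l.u := by
    rw [iprod, iprod, ← inner_sub_left, sub_sub_sub_cancel_right]
  linarith
end
end

section
/- Let a₁, …, aₙ be circular sectors with opening angles at most π/4 and let v be a unit vector such that |π − γ(u(aⱼ), v)| ≤ π/4 for every j. Suppose there exist indices k < n such that ⟨p(a_{k−1}) − p(a_k), v⟩ > 0 and p(a_{k−1}) ∈ a_k. Then this leads to a contradiction: containment p(a_{k−1}) ∈ a_k with ⟨p(a_{k−1}) − p(a_k), v⟩ > 0 forces |π − γ(u(a_k), v)| > π/2 − α(a_k)/2 ≥ 3π/8. -/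
open Real Set

noncomputable section

open InnerProductGeometry

theorem real_inner_nonpos_of_pi_div_two_le_angle {V : Type*} [NormedAddCommGroup V]
    [InnerProductSpace ℝ V] {x y : V} (h : π / 2 ≤ angle x y) : inner ℝ x y ≤ 0 := by
  rw [← cos_angle_mul_norm_mul_norm]
  have hcos : cos (angle x y) ≤ 0 :=
    cos_nonpos_of_pi_div_two_le_of_le h (by linarith [angle_le_pi x y, pi_pos])
  exact mul_nonpos_of_nonpos_of_nonneg hcos (by positivity)

theorem angle_eq_pi_sub_abs_pi_sub_ccw {u v : E2} (hu : u ≠ 0) (hv : v ≠ 0) :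
    angle u v = π - |π - ccw u v| := by
  have hlo := (stdOrient.oangle u v).neg_pi_lt_toReal
  have hhi := (stdOrient.oangle u v).toReal_le_pi
  rw [stdOrient.angle_eq_abs_oangle_toReal hu hv, ccw]
  split_ifs with hneg
  · rw [abs_of_neg hneg, abs_of_nonpos (by linarith)]
    ring
  · rw [abs_of_nonneg (not_lt.mp hneg), abs_of_nonneg (by linarith)]
    ring

theorem ordering_gadget_contradiction_general (n : ℕ) (a : Fin n → Sector) (v : E2)
    (hα : ∀ j, (a j).α ≤ π / 4)
    (hdir : ∀ j, |π - ccw (a j).u v| ≤ π / 4)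
    (j k : Fin n)
    (hproj : 0 < iprod ((a j).p - (a k).p) v)
    (hmem : (a k).mem (a j).p) :
    False := by
  have hv : v ≠ 0 := by
    rintro rfl
    simp [iprod] at hproj
  have hu : (a k).u ≠ 0 := norm_ne_zero_iff.mp (by simp [(a k).hu])
  have hopposed : 3 * π / 4 ≤ angle (a k).u v := by
    rw [angle_eq_pi_sub_abs_pi_sub_ccw hu hv]
    linarith [hdir k]
  have hnarrow : angle ((a j).p - (a k).p) (a k).u ≤ π / 8 :=
    hmem.2.trans (by linarith [hα k])
  have hobtuse : π / 2 ≤ angle ((a j).p - (a k).p) v := by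
    linarith [angle_le_angle_add_angle (a k).u ((a j).p - (a k).p) v,
      angle_comm (a k).u ((a j).p - (a k).p), pi_pos]
  exact (real_inner_nonpos_of_pi_div_two_le_angle hobtuse).not_gt hproj

/-- Core contradiction in the ordering gadget: a sector `a k` whose direction nearly
opposes `v` (|π − γ(u(a k), v)| ≤ π/4) cannot contain a point p(a j) that projects
strictly ahead of its apex along `v`. -/
theorem ordering_gadget_contradiction (n : ℕ) (a : Fin n → Sector) (v : E2)
    (hv : ‖v‖ = 1)
    (hα : ∀ j, (a j).α ≤ π / 4)
    (hdir : ∀ j, |π - ccw (a j).u v| ≤ π / 4)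
    (j k : Fin n)
    (hproj : 0 < iprod ((a j).p - (a k).p) v)
    (hmem : (a k).mem (a j).p) :
    False :=
  ordering_gadget_contradiction_general n a v hα hdir j k hproj hmem
end
end

section
/- Let x and y be circular sectors each with opening angle at most π/4 forming a mutual couple (p(x) ∈ y and p(y) ∈ x) with p(x) ≠ p(y). Then the undirected angle between u(x) and u(y) is at least π − (α(x) + α(y))/2 ≥ 3π/4, so ⟨u(x), u(y)⟩ ≤ cos(3π/4) = −√2/2; in particular u(x) and u(y) point in nearly opposite directions. -/
open Real Set

noncomputable section

lemma abs_toReal_coe_le {s : ℝ} (h : |s| ≤ π) : |((s : Real.Angle)).toReal| ≤ |s| := by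
  by_cases hs : s = -π
  · subst hs
    rw [Real.Angle.coe_neg, Real.Angle.neg_coe_pi, Real.Angle.toReal_pi]
    simp [abs_of_nonneg Real.pi_pos.le, abs_of_nonpos (neg_nonpos.mpr Real.pi_pos.le)]
  · rw [Real.Angle.toReal_coe_eq_self_iff.mpr ⟨lt_of_le_of_ne (neg_le_of_abs_le h) (Ne.symm hs), le_of_abs_le h⟩]

lemma angle_triangle_2d (u d v : E2) (hu : u ≠ 0) (hd : d ≠ 0) (hv : v ≠ 0)
    (hsum : InnerProductGeometry.angle u d + InnerProductGeometry.angle d v ≤ π) :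
    InnerProductGeometry.angle u v ≤
      InnerProductGeometry.angle u d + InnerProductGeometry.angle d v := by
  set o := stdOrient
  have h1 : InnerProductGeometry.angle u d = |(o.oangle u d).toReal| :=
    o.angle_eq_abs_oangle_toReal hu hd
  have h2 : InnerProductGeometry.angle d v = |(o.oangle d v).toReal| :=
    o.angle_eq_abs_oangle_toReal hd hv
  have h3 : InnerProductGeometry.angle u v = |(o.oangle u v).toReal| :=
    o.angle_eq_abs_oangle_toReal hu hv
  have hadd : o.oangle u v = o.oangle u d + o.oangle d v :=
    (o.oangle_add hu hd hv).symm
  have habs : |(o.oangle u d).toReal + (o.oangle d v).toReal| ≤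
      |(o.oangle u d).toReal| + |(o.oangle d v).toReal| := abs_add_le _ _
  have hle : |(o.oangle u d).toReal + (o.oangle d v).toReal| ≤ π := by
    rw [h1, h2] at hsum; exact le_trans habs hsum
  calc InnerProductGeometry.angle u v
      = |(o.oangle u v).toReal| := h3
    _ = |((((o.oangle u d).toReal + (o.oangle d v).toReal : ℝ) : Real.Angle)).toReal| := by
        rw [hadd]
        congr 1
        rw [Real.Angle.coe_add, Real.Angle.coe_toReal, Real.Angle.coe_toReal]
    _ ≤ |(o.oangle u d).toReal + (o.oangle d v).toReal| := abs_toReal_coe_le hle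
    _ ≤ _ := by rw [h1, h2]; exact habs

/-- A mutual couple of sectors with opening angles at most π/4 and distinct apexes has
nearly opposite directions: the undirected angle between u(x) and u(y) is at least
π − (α(x) + α(y))/2 ≥ 3π/4, hence ⟨u(x), u(y)⟩ ≤ −√2/2. -/
theorem couple_nearly_opposite (x y : Sector)
    (hx : x.α ≤ π / 4) (hy : y.α ≤ π / 4)
    (h1 : y.mem x.p) (h2 : x.mem y.p) (hp : x.p ≠ y.p) :
    π - (x.α + y.α) / 2 ≤ InnerProductGeometry.angle x.u y.u ∧
    3 * π / 4 ≤ π - (x.α + y.α) / 2 ∧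
    iprod x.u y.u ≤ -Real.sqrt 2 / 2 := by
  have hux : x.u ≠ 0 := by intro h; simpa [h] using x.hu
  have huy : y.u ≠ 0 := by intro h; simpa [h] using y.hu
  have hd : y.p - x.p ≠ 0 := sub_ne_zero.mpr (Ne.symm hp)
  have hxa : 0 < x.α := x.hα
  have hya : 0 < y.α := y.hα
  have hA : InnerProductGeometry.angle x.u (y.p - x.p) ≤ x.α / 2 := by
    rw [InnerProductGeometry.angle_comm]; exact h2.2
  have hB : InnerProductGeometry.angle (y.p - x.p) (-y.u) ≤ y.α / 2 := by
    have := h1.2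
    rw [show x.p - y.p = -(y.p - x.p) by abel] at this
    rw [← InnerProductGeometry.angle_neg_neg, neg_neg]
    exact this
  have hπ : 0 < π := Real.pi_pos
  have hsum : InnerProductGeometry.angle x.u (y.p - x.p) +
      InnerProductGeometry.angle (y.p - x.p) (-y.u) ≤ π := by
    have := add_le_add hA hB
    nlinarith
  have htri := angle_triangle_2d x.u (y.p - x.p) (-y.u) hux hd (neg_ne_zero.mpr huy) hsum
  have hneg : InnerProductGeometry.angle x.u (-y.u) = π - InnerProductGeometry.angle x.u y.u :=
    InnerProductGeometry.angle_neg_right x.u y.u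
  have key : π - (x.α + y.α) / 2 ≤ InnerProductGeometry.angle x.u y.u := by
    have := le_trans htri (add_le_add hA hB)
    rw [hneg] at this; linarith
  have key2 : 3 * π / 4 ≤ π - (x.α + y.α) / 2 := by linarith
  refine ⟨key, key2, ?_⟩
  have hcos : Real.cos (InnerProductGeometry.angle x.u y.u) = iprod x.u y.u := by
    rw [InnerProductGeometry.cos_angle, x.hu, y.hu]; simp [iprod]
  have h34 : (0:ℝ) ≤ 3 * π / 4 := by positivity
  have hle : Real.cos (InnerProductGeometry.angle x.u y.u) ≤ Real.cos (3 * π / 4) :=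
    Real.cos_le_cos_of_nonneg_of_le_pi h34 (InnerProductGeometry.angle_le_pi _ _)
      (le_trans key2 key)
  have hval : Real.cos (3 * π / 4) = -Real.sqrt 2 / 2 := by
    have : (3:ℝ) * π / 4 = π - π / 4 := by ring
    rw [this, Real.cos_pi_sub, Real.cos_pi_div_four]; ring
  rw [← hcos, ← hval]; exact hle
end
end

section
/- Let v be a segment direction and c a circular sector with opening angle α ≤ π/4 such that the undirected angle between u(c) and −v is at most α. If q ∈ c and ⟨q − p(c), v⟩ > 0 (q projects strictly ahead of the apex in direction v), then q = p(c); equivalently, no point of c other than the apex projects strictly ahead of the apex along v. -/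
open Real Set

noncomputable section

namespace InnerProductGeometry

open scoped RealInnerProductSpace

variable {V : Type*} [NormedAddCommGroup V] [InnerProductSpace ℝ V]

theorem inner_pos_of_angle_lt_pi_div_two {x y : V} (h : angle x y < π / 2) : 0 < ⟪x, y⟫ := by
  rw [angle, arccos_lt_pi_div_two] at h
  by_contra! hle
  exact h.not_ge (div_nonpos_of_nonpos_of_nonneg hle (by positivity))

theorem inner_neg_of_angle_add_angle_neg_lt_pi_div_two {x u v : V}
    (h : angle x u + angle u (-v) < π / 2) : ⟪x, v⟫ < 0 := by
  have hback : 0 < ⟪x, -v⟫ :=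
    inner_pos_of_angle_lt_pi_div_two ((angle_le_angle_add_angle x u (-v)).trans_lt h)
  rwa [inner_neg_right, neg_pos] at hback

end InnerProductGeometry

theorem no_point_projects_ahead_general (c : Sector) (v : E2)
    (hα : c.α ≤ π / 4)
    (hdir : InnerProductGeometry.angle c.u (-v) ≤ c.α)
    (q : E2) (hq : c.mem q) (hproj : 0 < iprod (q - c.p) v) :
    q = c.p := by
  have hbehind : iprod (q - c.p) v < 0 :=
    InnerProductGeometry.inner_neg_of_angle_add_angle_neg_lt_pi_div_two (u := c.u)
      (by linarith [hq.2, pi_pos])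
  -- Every point of `c` lies strictly behind the apex, so `hproj` can never hold.
  exact absurd hproj hbehind.not_gt

/-- Monotonicity fact underlying the ordering gadget: if the direction of sector `c`
(opening angle α ≤ π/4) makes angle at most α with `−v`, then no point of `c` other
than the apex projects strictly ahead of the apex along `v`. -/
theorem no_point_projects_ahead (c : Sector) (v : E2) (hv : ‖v‖ = 1)
    (hα : c.α ≤ π / 4)
    (hdir : InnerProductGeometry.angle c.u (-v) ≤ c.α)
    (q : E2) (hq : c.mem q) (hproj : 0 < iprod (q - c.p) v) :
    q = c.p :=
  no_point_projects_ahead_general c v hα hdir q hq hproj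
end
end
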